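/- arXiv:1710.06261 — 2 statements merged into one kernel-verified Lean document; each statement's English description precedes it below -/
import Mathlib

section
/- Let Φ : [0, ℓ] → ℝ^{n×n} be continuous and let Ψ : [0, ℓ] → ℝ^{n×n} be twice continuously differentiable with Ψ''(t) = Φ(t)Ψ(t) for all t ∈ [0, ℓ], Ψ(0) = A and Ψ'(0) = B. Let λ = max_{0 ≤ t ≤ ℓ} ‖Φ(t)‖_F and assume λ > 0. Then for all t with 0 ≤ t ≤ min(ℓ, 1/√λ), ‖Ψ(t) − A − Bt‖_F ≤ λ (t² ‖A‖₂ + (t³/5) ‖B‖₂). -/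
open Set Matrix

/-- The spectral (ℓ² operator) norm of a real square matrix. -/
noncomputable def specNorm {n : ℕ} (A : Matrix (Fin n) (Fin n) ℝ) : ℝ :=
  ‖LinearMap.toContinuousLinearMap (Matrix.toEuclideanLin A)‖

/-- The Frobenius norm of a real square matrix. -/
noncomputable def frobNorm {n : ℕ} (A : Matrix (Fin n) (Fin n) ℝ) : ℝ :=
  Real.sqrt (∑ i, ∑ j, (A i j) ^ 2)

/-!
Put `F(s) = Ψ(s) - A - sB`, so that `F(0) = F'(0) = 0` and `F'' = ΦΨ` with
`Ψ = A + sB + F`. Since `‖ΦΨ‖_F ≤ ‖Φ‖_F ‖Ψ‖₂`, this gives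
`‖F''(s)‖_F ≤ λ (‖A‖₂ + s‖B‖₂ + ‖F(s)‖_F)`.
Let `K(s) = λ (s²‖A‖₂ + (s³/5)‖B‖₂)` and let `δ ≥ 0` bound the excess `‖F‖_F - K` on `[0, t]`.
Inserting `‖F‖_F ≤ K + δ` into the inequality for `F''` and using `λs² ≤ 1` to bound `λK(s)`
by `λ(‖A‖₂ + s‖B‖₂/5)` leaves an affine majorant of `‖F''‖_F`; integrating it twice returns
`‖F‖_F ≤ K + δ/2`. The constants `1` and `1/5` in `K` are exactly the fixed point of this step.
Taking for `δ` the maximal excess forces `δ ≤ δ/2`, i.e. `δ = 0`.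
-/

section SecondOrderComparison

variable {E : Type*} [NormedAddCommGroup E] [NormedSpace ℝ E]

theorem norm_image_le_of_norm_deriv₂_le_affine {f f' f'' : ℝ → E} {t p q : ℝ}
    (hf : ∀ x ∈ Icc 0 t, HasDerivAt f (f' x) x) (hf' : ∀ x ∈ Icc 0 t, HasDerivAt f' (f'' x) x)
    (h₀ : f 0 = 0) (h₀' : f' 0 = 0) (bound : ∀ x ∈ Ico 0 t, ‖f'' x‖ ≤ p + q * x) :
    ∀ x ∈ Icc 0 t, ‖f x‖ ≤ p / 2 * x ^ 2 + q / 6 * x ^ 3 := by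
  have hf'_le : ∀ x ∈ Icc 0 t, ‖f' x‖ ≤ p * x + q / 2 * x ^ 2 :=
    image_norm_le_of_norm_deriv_right_le_deriv_boundary
      (fun x hx => (hf' x hx).continuousAt.continuousWithinAt)
      (fun x hx => (hf' x (Ico_subset_Icc_self hx)).hasDerivWithinAt) (by simp [h₀'])
      (fun x => (((hasDerivAt_id x).const_mul p).add
        ((hasDerivAt_pow 2 x).const_mul (q / 2))).congr_deriv (by simp; ring))
      bound
  exact image_norm_le_of_norm_deriv_right_le_deriv_boundary
    (fun x hx => (hf x hx).continuousAt.continuousWithinAt)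
    (fun x hx => (hf x (Ico_subset_Icc_self hx)).hasDerivWithinAt) (by simp [h₀])
    (fun x => (((hasDerivAt_pow 2 x).const_mul (p / 2)).add
        ((hasDerivAt_pow 3 x).const_mul (q / 6))).congr_deriv (by simp; ring))
    fun x hx => hf'_le x (Ico_subset_Icc_self hx)

theorem norm_image_le_of_norm_deriv₂_le_mul_add_norm {f f' f'' : ℝ → E} {lam a b t : ℝ}
    (hlam : 0 ≤ lam) (ha : 0 ≤ a) (hb : 0 ≤ b) (ht : 0 ≤ t) (hlamt : lam * t ^ 2 ≤ 1)
    (hf : ∀ x ∈ Icc 0 t, HasDerivAt f (f' x) x) (hf' : ∀ x ∈ Icc 0 t, HasDerivAt f' (f'' x) x)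
    (h₀ : f 0 = 0) (h₀' : f' 0 = 0)
    (bound : ∀ x ∈ Icc 0 t, ‖f'' x‖ ≤ lam * (a + b * x + ‖f x‖)) :
    ‖f t‖ ≤ lam * (a * t ^ 2 + b * t ^ 3 / 5) := by
  set K : ℝ → ℝ := fun x => lam * (a * x ^ 2 + b * x ^ 3 / 5)
  obtain ⟨x₀, hx₀, hmax⟩ := isCompact_Icc.exists_isMaxOn (nonempty_Icc.2 ht)
    (f := fun x => ‖f x‖ - K x) fun x hx =>
      ((hf x hx).continuousAt.norm.sub (by fun_prop)).continuousWithinAt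
  set δ := max (‖f x₀‖ - K x₀) 0
  have hδ : 0 ≤ δ := le_max_right _ _
  have hle : ∀ x ∈ Icc 0 t, ‖f x‖ ≤ K x + δ := fun x hx => by
    linarith [isMaxOn_iff.1 hmax x hx, le_max_left (‖f x₀‖ - K x₀) 0]
  have hsmall : ∀ x ∈ Icc 0 t, lam * x ^ 2 ≤ 1 := fun x hx =>
    le_trans (by gcongr; exacts [hx.1, hx.2]) hlamt
  have hhalf : ∀ x ∈ Icc 0 t, ‖f x‖ ≤ K x + δ / 2 := by
    intro x hx
    have hbound : ∀ y ∈ Ico 0 t, ‖f'' y‖ ≤ lam * (2 * a + δ) + 6 / 5 * lam * b * y := by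
      intro y hy
      have hy' := Ico_subset_Icc_self hy
      have hK : lam * K y ≤ lam * (a + b * y / 5) := by
        have hKy : lam * K y = (lam * y ^ 2) * (lam * (a + b * y / 5)) := by simp only [K]; ring
        rw [hKy]
        exact mul_le_of_le_one_left (by have := hy.1; positivity) (hsmall y hy')
      calc ‖f'' y‖ ≤ lam * (a + b * y + ‖f y‖) := bound y hy'
        _ ≤ lam * (a + b * y + (K y + δ)) := by gcongr; exact hle y hy'
        _ ≤ _ := by linarith
    have hδx : lam * x ^ 2 * δ ≤ δ := mul_le_of_le_one_left hδ (hsmall x hx)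
    calc ‖f x‖ ≤ lam * (2 * a + δ) / 2 * x ^ 2 + 6 / 5 * lam * b / 6 * x ^ 3 :=
          norm_image_le_of_norm_deriv₂_le_affine hf hf' h₀ h₀' hbound x hx
      _ = K x + lam * x ^ 2 * δ / 2 := by simp only [K]; ring
      _ ≤ K x + δ / 2 := by linarith
  have hδ_half : δ ≤ δ / 2 := max_le (by linarith [hhalf x₀ hx₀]) (by linarith)
  calc ‖f t‖ ≤ K t + δ := hle t ⟨ht, le_rfl⟩
    _ ≤ K t := by linarith

end SecondOrderComparison

section MatrixNorms

variable {n : ℕ}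

section Frobenius

open scoped Matrix.Norms.Frobenius

theorem frobNorm_eq_norm (A : Matrix (Fin n) (Fin n) ℝ) : frobNorm A = ‖A‖ := by
  simp [frobenius_norm_def, frobNorm, Real.sqrt_eq_rpow]

theorem specNorm_le_frobNorm (A : Matrix (Fin n) (Fin n) ℝ) : specNorm A ≤ frobNorm A := by
  rw [frobNorm_eq_norm]
  refine ContinuousLinearMap.opNorm_le_bound _ (norm_nonneg A) fun x => ?_
  calc ‖toEuclideanLin A x‖ = ‖replicateCol Unit (A *ᵥ x.ofLp)‖ :=
        (frobenius_norm_replicateCol _).symm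
    _ = ‖A * replicateCol Unit x.ofLp‖ := by rw [replicateCol_mulVec]
    _ ≤ ‖A‖ * ‖replicateCol Unit x.ofLp‖ := frobenius_norm_mul _ _
    _ = ‖A‖ * ‖x‖ := by rw [frobenius_norm_replicateCol]

end Frobenius

theorem frobNorm_sq_eq_sum_row (A : Matrix (Fin n) (Fin n) ℝ) :
    frobNorm A ^ 2 = ∑ i, ‖WithLp.toLp 2 (A i)‖ ^ 2 := by
  rw [frobNorm, Real.sq_sqrt (by positivity)]
  simp [EuclideanSpace.norm_sq_eq]

section L2

open scoped Matrix.Norms.L2Operator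

theorem frobNorm_mul_le (A B : Matrix (Fin n) (Fin n) ℝ) :
    frobNorm (A * B) ≤ frobNorm A * specNorm B := by
  have hrow : ∀ i, ‖WithLp.toLp 2 ((A * B) i)‖ ≤ specNorm B * ‖WithLp.toLp 2 (A i)‖ := fun i => by
    have := l2_opNorm_mulVec Bᵀ (WithLp.toLp 2 (A i))
    rwa [← conjTranspose_eq_transpose_of_trivial, l2_opNorm_conjTranspose,
      conjTranspose_eq_transpose_of_trivial, mulVec_transpose] at this
  refine (pow_le_pow_iff_left₀ (Real.sqrt_nonneg _)
    (mul_nonneg (Real.sqrt_nonneg _) (norm_nonneg B)) two_ne_zero).1 ?_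
  calc frobNorm (A * B) ^ 2 = ∑ i, ‖WithLp.toLp 2 ((A * B) i)‖ ^ 2 := frobNorm_sq_eq_sum_row _
    _ ≤ ∑ i, (specNorm B * ‖WithLp.toLp 2 (A i)‖) ^ 2 := by gcongr with i; exact hrow i
    _ = (frobNorm A * specNorm B) ^ 2 := by
      rw [mul_pow, frobNorm_sq_eq_sum_row, Finset.sum_mul]
      simp only [mul_pow, mul_comm]

theorem specNorm_add_smul_add_le (A B C : Matrix (Fin n) (Fin n) ℝ) {s : ℝ} (hs : 0 ≤ s) :
    specNorm (A + s • B + C) ≤ specNorm A + s * specNorm B + frobNorm C :=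
  calc ‖A + s • B + C‖ ≤ ‖A‖ + ‖s • B‖ + ‖C‖ := norm_add₃_le
    _ = specNorm A + s * specNorm B + specNorm C := by rw [norm_smul, Real.norm_of_nonneg hs]; rfl
    _ ≤ specNorm A + s * specNorm B + frobNorm C := by grw [specNorm_le_frobNorm C]

end L2

section Frobenius

open scoped Matrix.Norms.Frobenius

theorem Matrix.hasDerivAt_of_entries {m p : Type*} [Fintype m] [Fintype p]
    {M : ℝ → Matrix m p ℝ} {M' : Matrix m p ℝ} {t : ℝ}
    (h : ∀ i j, HasDerivAt (fun s => M s i j) (M' i j) t) : HasDerivAt M M' t :=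
  hasDerivAt_pi.2 fun i => hasDerivAt_pi.2 (h i)

theorem frobNorm_taylor_remainder_le {Φ Ψ Ψ' : ℝ → Matrix (Fin n) (Fin n) ℝ} {lam t : ℝ}
    (hlam : 0 ≤ lam) (ht : 0 ≤ t) (hlamt : lam * t ^ 2 ≤ 1)
    (hΨ : ∀ s ∈ Icc 0 t, ∀ i j, HasDerivAt (fun r => Ψ r i j) (Ψ' s i j) s)
    (hΨ' : ∀ s ∈ Icc 0 t, ∀ i j, HasDerivAt (fun r => Ψ' r i j) ((Φ s * Ψ s) i j) s)
    (hΦ : ∀ s ∈ Icc 0 t, frobNorm (Φ s) ≤ lam) :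
    frobNorm (Ψ t - Ψ 0 - t • Ψ' 0) ≤
      lam * (t ^ 2 * specNorm (Ψ 0) + t ^ 3 / 5 * specNorm (Ψ' 0)) := by
  have hbound : ∀ s ∈ Icc 0 t, ‖Φ s * Ψ s‖ ≤
      lam * (specNorm (Ψ 0) + specNorm (Ψ' 0) * s + ‖Ψ s - Ψ 0 - s • Ψ' 0‖) := by
    intro s hs
    have hsplit : Ψ s = Ψ 0 + s • Ψ' 0 + (Ψ s - Ψ 0 - s • Ψ' 0) := by abel
    rw [← frobNorm_eq_norm, ← frobNorm_eq_norm, mul_comm (specNorm (Ψ' 0))]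
    calc frobNorm (Φ s * Ψ s) ≤ frobNorm (Φ s) * specNorm (Ψ s) := frobNorm_mul_le _ _
      _ ≤ _ := by
        gcongr
        · exact norm_nonneg _
        · exact hΦ s hs
        · exact (congrArg specNorm hsplit).trans_le (specNorm_add_smul_add_le _ _ _ hs.1)
  rw [frobNorm_eq_norm]
  convert norm_image_le_of_norm_deriv₂_le_mul_add_norm (f := fun r => Ψ r - Ψ 0 - r • Ψ' 0)
    (f' := fun r => Ψ' r - Ψ' 0) (a := specNorm (Ψ 0)) (b := specNorm (Ψ' 0))
    hlam (norm_nonneg _) (norm_nonneg _) ht hlamt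
    (fun s hs => hasDerivAt_of_entries fun i j =>
      ((hΨ s hs i j).sub_const (Ψ 0 i j)).sub (hasDerivAt_mul_const (Ψ' 0 i j)))
    (fun s hs => hasDerivAt_of_entries fun i j => (hΨ' s hs i j).sub_const (Ψ' 0 i j))
    (by simp) (sub_self _) hbound using 1
  ring

end Frobenius

end MatrixNorms

theorem matrix_ode_taylor_estimate_general
    (n : ℕ) (ℓ : ℝ)
    (Φ Ψ Ψ' : ℝ → Matrix (Fin n) (Fin n) ℝ)
    (A B : Matrix (Fin n) (Fin n) ℝ)
    (hΨ : ∀ t ∈ Icc 0 ℓ, ∀ i j, HasDerivAt (fun s => Ψ s i j) (Ψ' t i j) t)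
    (hΨ' : ∀ t ∈ Icc 0 ℓ, ∀ i j, HasDerivAt (fun s => Ψ' s i j) ((Φ t * Ψ t) i j) t)
    (hA : Ψ 0 = A) (hB : Ψ' 0 = B)
    (lam : ℝ)
    (hlam : IsGreatest ((fun t => frobNorm (Φ t)) '' Icc 0 ℓ) lam) :
    ∀ t : ℝ, 0 ≤ t → t ≤ min ℓ (1 / Real.sqrt lam) →
      frobNorm (Ψ t - A - t • B) ≤
        lam * (t ^ 2 * specNorm A + (t ^ 3 / 5) * specNorm B) := by
  intro t ht htT
  obtain ⟨s₀, -, hs₀⟩ := hlam.1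
  have hlam0 : 0 ≤ lam := hs₀ ▸ Real.sqrt_nonneg _
  have hlamt : lam * t ^ 2 ≤ 1 :=
    calc lam * t ^ 2 = (Real.sqrt lam * t) ^ 2 := by rw [mul_pow, Real.sq_sqrt hlam0]
      _ ≤ (Real.sqrt lam * (Real.sqrt lam)⁻¹) ^ 2 := by
        gcongr
        exact (htT.trans (min_le_right _ _)).trans_eq (one_div _)
      _ ≤ 1 := pow_le_one₀ (by positivity) mul_inv_le_one
  have hsub : Icc 0 t ⊆ Icc 0 ℓ := Icc_subset_Icc_right (htT.trans (min_le_left _ _))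
  subst hA hB
  exact frobNorm_taylor_remainder_le hlam0 ht hlamt (fun s hs => hΨ s (hsub hs))
    (fun s hs => hΨ' s (hsub hs)) fun s hs => hlam.2 ⟨s, hsub hs, rfl⟩

/-- second-order Taylor estimate for the solution of `Ψ'' = Φ Ψ`. -/
theorem matrix_ode_taylor_estimate
    (n : ℕ) (ℓ : ℝ) (hℓ : 0 ≤ ℓ)
    (Φ Ψ Ψ' : ℝ → Matrix (Fin n) (Fin n) ℝ)
    (A B : Matrix (Fin n) (Fin n) ℝ)
    (hΦcont : ∀ i j, ContinuousOn (fun t => Φ t i j) (Icc 0 ℓ))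
    (hΨ : ∀ t ∈ Icc 0 ℓ, ∀ i j, HasDerivAt (fun s => Ψ s i j) (Ψ' t i j) t)
    (hΨ' : ∀ t ∈ Icc 0 ℓ, ∀ i j, HasDerivAt (fun s => Ψ' s i j) ((Φ t * Ψ t) i j) t)
    (hA : Ψ 0 = A) (hB : Ψ' 0 = B)
    (lam : ℝ)
    (hlam : IsGreatest ((fun t => frobNorm (Φ t)) '' Icc 0 ℓ) lam)
    (hlampos : 0 < lam) :
    ∀ t : ℝ, 0 ≤ t → t ≤ min ℓ (1 / Real.sqrt lam) →
      frobNorm (Ψ t - A - t • B) ≤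
        lam * (t ^ 2 * specNorm A + (t ^ 3 / 5) * specNorm B) :=
  matrix_ode_taylor_estimate_general n ℓ Φ Ψ Ψ' A B hΨ hΨ' hA hB lam hlam
end

section
/- Let E ∈ ℝ^{n×n} be a (not necessarily symmetric) matrix with spectral norm ‖E‖₂ ≤ 1/4. Then det(I + E) > 0 and |log det(I + E) − tr E| ≤ ‖E‖_F². -/
/-!
Let `g t = log det (1 + t E) - t tr E` on `[0, 1]`. By Jacobi's formula
`g' t = tr ((1 + t E)⁻¹ E) - tr E = -t tr ((1 + t E)⁻¹ E E)`, and Cauchy–Schwarz for the trace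
together with `‖(1 + t E)⁻¹‖₂ ≤ (1 - ‖E‖₂)⁻¹` gives `|g' t| ≤ t ‖E‖_F² / (1 - ‖E‖₂)`.
Integrating from `g 0 = 0` yields `|g 1| ≤ ‖E‖_F² / (2 (1 - ‖E‖₂)) ≤ ‖E‖_F²`.
The determinant stays positive because `det (1 + t E)` equals `1` at `t = 0` and never vanishes
on `[0, 1]`.
-/

open Matrix

open Set
open scoped Matrix.Norms.L2Operator

section Jacobi

variable {𝕜 ι : Type*} [NontriviallyNormedField 𝕜] [Fintype ι] [DecidableEq ι]

open Polynomial in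
theorem Matrix.hasDerivAt_det_one_add_smul_zero (M : Matrix ι ι 𝕜) :
    HasDerivAt (fun s : 𝕜 => (1 + s • M).det) M.trace 0 := by
  have h := (det (1 + (X : 𝕜[X]) • M.map C)).hasDerivAt 0
  rw [derivative_det_one_add_X_smul] at h
  convert h using 1
  funext s
  rw [eval_det]
  congr 1
  ext i j
  simp [mul_comm]

theorem Matrix.hasDerivAt_det_add_smul_zero (A E : Matrix ι ι 𝕜) (hA : IsUnit A.det) :
    HasDerivAt (fun s : 𝕜 => (A + s • E).det) (A.det * (A⁻¹ * E).trace) 0 := by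
  have hfactor : ∀ s : 𝕜, A + s • E = A * (1 + s • (A⁻¹ * E)) := fun s => by
    rw [mul_add, mul_one, Matrix.mul_smul, ← Matrix.mul_assoc, mul_nonsing_inv A hA, Matrix.one_mul]
  simp_rw [hfactor, det_mul]
  exact (hasDerivAt_det_one_add_smul_zero _).const_mul A.det

theorem Matrix.hasDerivAt_det_add_smul (A E : Matrix ι ι 𝕜) (t : 𝕜)
    (ht : IsUnit (A + t • E).det) :
    HasDerivAt (fun s : 𝕜 => (A + s • E).det)
      ((A + t • E).det * ((A + t • E)⁻¹ * E).trace) t := by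
  have h := HasDerivAt.comp_sub_const t t (by
    rw [sub_self]; exact hasDerivAt_det_add_smul_zero (A + t • E) E ht)
  have hline : (fun s : 𝕜 => (A + s • E).det) = fun s => (A + t • E + (s - t) • E).det := by
    funext s
    rw [add_assoc, ← add_smul, add_sub_cancel]
  rwa [hline]

end Jacobi

theorem Matrix.trace_inv_one_add_smul_mul_sub_trace {R ι : Type*} [CommRing R] [Fintype ι]
    [DecidableEq ι] (E : Matrix ι ι R) (t : R) (ht : IsUnit (1 + t • E).det) :
    ((1 + t • E)⁻¹ * E).trace - E.trace = -t * ((1 + t • E)⁻¹ * E * E).trace := by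
  have hinv : (1 + t • E)⁻¹ * E - E = -t • ((1 + t • E)⁻¹ * E * E) := by
    calc (1 + t • E)⁻¹ * E - E = (1 + t • E)⁻¹ * (E - (1 + t • E) * E) := by
          rw [mul_sub, ← Matrix.mul_assoc, nonsing_inv_mul _ ht, Matrix.one_mul]
      _ = -t • ((1 + t • E)⁻¹ * E * E) := by
          rw [add_mul, Matrix.one_mul, smul_mul, sub_add_cancel_left, mul_neg, Matrix.mul_smul,
            Matrix.mul_assoc, neg_smul]
  rw [← trace_sub, hinv, trace_smul, smul_eq_mul]

section L2OpNorm

variable {𝕜 ι : Type*} [RCLike 𝕜] [Fintype ι] [DecidableEq ι]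

theorem Matrix.l2_opNorm_one_le : ‖(1 : Matrix ι ι 𝕜)‖ ≤ 1 := by
  rw [cstar_norm_def, map_one]
  exact ContinuousLinearMap.norm_id_le

theorem Matrix.isUnit_one_add_of_l2_opNorm_lt_one {M : Matrix ι ι 𝕜} (hM : ‖M‖ < 1) :
    IsUnit (1 + M) := by
  simpa using isUnit_one_sub_of_norm_lt_one (x := -M) (by rwa [norm_neg])

theorem Matrix.isUnit_det_one_add_of_l2_opNorm_lt_one {M : Matrix ι ι 𝕜} (hM : ‖M‖ < 1) :
    IsUnit (1 + M).det :=
  (isUnit_iff_isUnit_det _).mp (isUnit_one_add_of_l2_opNorm_lt_one hM)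

theorem Matrix.l2_opNorm_inv_one_add_le {M : Matrix ι ι 𝕜} (hM : ‖M‖ < 1) :
    ‖(1 + M)⁻¹‖ ≤ (1 - ‖M‖)⁻¹ := by
  have hunit := isUnit_det_one_add_of_l2_opNorm_lt_one hM
  have hid : (1 + M)⁻¹ = 1 - M * (1 + M)⁻¹ := by
    have h := mul_nonsing_inv _ hunit
    rw [add_mul, Matrix.one_mul, ← eq_sub_iff_add_eq'] at h
    rw [h, sub_sub_cancel]
  have hle : ‖(1 + M)⁻¹‖ ≤ 1 + ‖M‖ * ‖(1 + M)⁻¹‖ :=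
    calc ‖(1 + M)⁻¹‖ = ‖1 - M * (1 + M)⁻¹‖ := congrArg norm hid
      _ ≤ ‖(1 : Matrix ι ι 𝕜)‖ + ‖M * (1 + M)⁻¹‖ := norm_sub_le _ _
      _ ≤ 1 + ‖M‖ * ‖(1 + M)⁻¹‖ := add_le_add l2_opNorm_one_le (norm_mul_le _ _)
  have hpos : 0 < 1 - ‖M‖ := sub_pos.mpr hM
  refine le_of_mul_le_mul_right ?_ hpos
  rw [inv_mul_cancel₀ hpos.ne']
  linarith

end L2OpNorm

section Frobenius

variable {n : ℕ}

theorem frobNorm_nonneg (A : Matrix (Fin n) (Fin n) ℝ) : 0 ≤ frobNorm A :=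
  Real.sqrt_nonneg _

theorem frobNorm_sq (A : Matrix (Fin n) (Fin n) ℝ) : frobNorm A ^ 2 = ∑ i, ∑ j, A i j ^ 2 :=
  Real.sq_sqrt (by positivity)

theorem frobNorm_neg (A : Matrix (Fin n) (Fin n) ℝ) : frobNorm (-A) = frobNorm A := by
  simp [frobNorm]

theorem trace_mul_le_frobNorm_mul (A B : Matrix (Fin n) (Fin n) ℝ) :
    (A * B).trace ≤ frobNorm A * frobNorm B := by
  have h := Real.sum_mul_le_sqrt_mul_sqrt Finset.univ
    (fun p : Fin n × Fin n => A p.1 p.2) (fun p => B p.2 p.1)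
  simp only [Fintype.sum_prod_type] at h
  rw [Finset.sum_comm (f := fun i j => B j i ^ 2)] at h
  simpa [trace, mul_apply, frobNorm] using h

theorem abs_trace_mul_le_frobNorm_mul (A B : Matrix (Fin n) (Fin n) ℝ) :
    |(A * B).trace| ≤ frobNorm A * frobNorm B :=
  abs_le'.mpr ⟨trace_mul_le_frobNorm_mul A B, by
    simpa [frobNorm_neg] using trace_mul_le_frobNorm_mul A (-B)⟩

theorem sum_sq_mul_apply_le (A B : Matrix (Fin n) (Fin n) ℝ) (j : Fin n) :
    ∑ i, (A * B) i j ^ 2 ≤ ‖A‖ ^ 2 * ∑ k, B k j ^ 2 := by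
  have h := l2_opNorm_mulVec A (WithLp.toLp 2 fun k => B k j)
  rw [← sq_le_sq₀ (norm_nonneg _) (by positivity), mul_pow, EuclideanSpace.norm_sq_eq,
    EuclideanSpace.norm_sq_eq] at h
  simpa [mul_apply, mulVec, dotProduct] using h

theorem frobNorm_mul_le_l2_opNorm_mul (A B : Matrix (Fin n) (Fin n) ℝ) :
    frobNorm (A * B) ≤ ‖A‖ * frobNorm B := by
  rw [← sq_le_sq₀ (frobNorm_nonneg _) (mul_nonneg (norm_nonneg _) (frobNorm_nonneg _)),
    frobNorm_sq, mul_pow, frobNorm_sq, Finset.sum_comm,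
    Finset.sum_comm (f := fun i j => B i j ^ 2), Finset.mul_sum]
  exact Finset.sum_le_sum fun j _ => sum_sq_mul_apply_le A B j

theorem abs_trace_mul_mul_le (M E : Matrix (Fin n) (Fin n) ℝ) :
    |(M * E * E).trace| ≤ ‖M‖ * frobNorm E ^ 2 :=
  calc |(M * E * E).trace| ≤ frobNorm (M * E) * frobNorm E := abs_trace_mul_le_frobNorm_mul _ _
    _ ≤ ‖M‖ * frobNorm E * frobNorm E := by
        gcongr
        · exact frobNorm_nonneg E
        · exact frobNorm_mul_le_l2_opNorm_mul M E
    _ = ‖M‖ * frobNorm E ^ 2 := by ring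

end Frobenius

theorem norm_smul_le_of_mem_Icc {V : Type*} [SeminormedAddCommGroup V] [NormedSpace ℝ V]
    {t : ℝ} (ht : t ∈ Icc (0 : ℝ) 1) (v : V) : ‖t • v‖ ≤ ‖v‖ := by
  rw [norm_smul_of_nonneg ht.1]
  exact mul_le_of_le_one_left (norm_nonneg v) ht.2

section OneAddSmul

variable {ι : Type*} [Fintype ι] [DecidableEq ι] {E : Matrix ι ι ℝ}

theorem Matrix.isUnit_det_one_add_smul (hE : ‖E‖ < 1) {t : ℝ} (ht : t ∈ Icc (0 : ℝ) 1) :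
    IsUnit (1 + t • E).det :=
  isUnit_det_one_add_of_l2_opNorm_lt_one ((norm_smul_le_of_mem_Icc ht E).trans_lt hE)

theorem Matrix.det_one_add_pos (hE : ‖E‖ < 1) : 0 < (1 + E).det := by
  have hcont : ContinuousOn (fun t : ℝ => (1 + t • E).det) (Icc 0 1) :=
    Continuous.continuousOn (by fun_prop)
  by_contra hneg
  obtain ⟨t, ht, hzero⟩ := intermediate_value_Icc' zero_le_one hcont
    ⟨by simpa using not_lt.mp hneg, by simp⟩
  exact (isUnit_det_one_add_smul hE ht).ne_zero hzero

theorem Matrix.l2_opNorm_inv_one_add_smul_le (hE : ‖E‖ < 1) {t : ℝ} (ht : t ∈ Icc (0 : ℝ) 1) :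
    ‖(1 + t • E)⁻¹‖ ≤ (1 - ‖E‖)⁻¹ := by
  have htE := norm_smul_le_of_mem_Icc ht E
  calc ‖(1 + t • E)⁻¹‖ ≤ (1 - ‖t • E‖)⁻¹ := l2_opNorm_inv_one_add_le (htE.trans_lt hE)
    _ ≤ (1 - ‖E‖)⁻¹ := by gcongr

theorem Matrix.hasDerivAt_log_det_one_add_smul_sub (hE : ‖E‖ < 1) {t : ℝ}
    (ht : t ∈ Icc (0 : ℝ) 1) :
    HasDerivAt (fun s : ℝ => Real.log (1 + s • E).det - s * E.trace)
      (-t * ((1 + t • E)⁻¹ * E * E).trace) t := by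
  have hunit := isUnit_det_one_add_smul hE ht
  have h := ((hasDerivAt_det_add_smul 1 E t hunit).log hunit.ne_zero).sub
    (hasDerivAt_mul_const E.trace)
  rwa [mul_div_cancel_left₀ _ hunit.ne_zero, trace_inv_one_add_smul_mul_sub_trace E t hunit] at h

end OneAddSmul

theorem abs_trace_inv_one_add_smul_mul_mul_le {n : ℕ} {E : Matrix (Fin n) (Fin n) ℝ}
    (hE : ‖E‖ < 1) {t : ℝ} (ht : t ∈ Icc (0 : ℝ) 1) :
    |((1 + t • E)⁻¹ * E * E).trace| ≤ frobNorm E ^ 2 / (1 - ‖E‖) :=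
  calc _ ≤ ‖(1 + t • E)⁻¹‖ * frobNorm E ^ 2 := abs_trace_mul_mul_le _ _
    _ ≤ (1 - ‖E‖)⁻¹ * frobNorm E ^ 2 := by gcongr; exact l2_opNorm_inv_one_add_smul_le hE ht
    _ = frobNorm E ^ 2 / (1 - ‖E‖) := by ring

theorem abs_log_det_one_add_sub_trace_le {n : ℕ} {E : Matrix (Fin n) (Fin n) ℝ} (hE : ‖E‖ < 1) :
    |Real.log (1 + E).det - E.trace| ≤ frobNorm E ^ 2 / (2 * (1 - ‖E‖)) := by
  set c := frobNorm E ^ 2 / (1 - ‖E‖) with hc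
  have hderiv : ∀ t ∈ Icc (0 : ℝ) 1, HasDerivAt
      (fun s : ℝ => Real.log (1 + s • E).det - s * E.trace)
      (-t * ((1 + t • E)⁻¹ * E * E).trace) t :=
    fun t ht => hasDerivAt_log_det_one_add_smul_sub hE ht
  have hbound : ∀ t ∈ Ico (0 : ℝ) 1, ‖-t * ((1 + t • E)⁻¹ * E * E).trace‖ ≤ c * t := by
    intro t ht
    rw [Real.norm_eq_abs, abs_mul, abs_neg, abs_of_nonneg ht.1, mul_comm c]
    exact mul_le_mul_of_nonneg_left
      (abs_trace_inv_one_add_smul_mul_mul_le hE (Ico_subset_Icc_self ht)) ht.1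
  have h := image_norm_le_of_norm_deriv_right_le_deriv_boundary (B := fun t => c / 2 * t ^ 2)
    (fun t ht => (hderiv t ht).continuousAt.continuousWithinAt)
    (fun t ht => (hderiv t (Ico_subset_Icc_self ht)).hasDerivWithinAt) (by simp)
    (fun t => ((hasDerivAt_pow 2 t).const_mul (c / 2)).congr_deriv (by push_cast; ring))
    hbound (right_mem_Icc.mpr zero_le_one)
  calc _ ≤ c / 2 := by simpa using h
    _ = _ := by rw [hc, div_div, mul_comm (1 - ‖E‖)]

theorem specNorm_eq_l2_opNorm {n : ℕ} (A : Matrix (Fin n) (Fin n) ℝ) : specNorm A = ‖A‖ := rfl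

/-- If `‖E‖₂ ≤ 1/4` then `det(I + E) > 0` and
`|log det(I + E) − tr E| ≤ ‖E‖_F²`. -/
theorem logdet_trace_estimate
    (n : ℕ) (E : Matrix (Fin n) (Fin n) ℝ) (hE : specNorm E ≤ 1/4) :
    0 < (1 + E).det ∧ |Real.log (1 + E).det - E.trace| ≤ frobNorm E ^ 2 := by
  rw [specNorm_eq_l2_opNorm] at hE
  refine ⟨det_one_add_pos (by linarith), (abs_log_det_one_add_sub_trace_le (by linarith)).trans ?_⟩
  exact div_le_self (sq_nonneg _) (by linarith)
end
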